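/- arXiv:0810.3412 — 7 statements merged into one kernel-verified Lean document; each statement's English description precedes it below -/
import Mathlib

section
/- For all m, p > 0, the harmonic vase HV(m,p) is a compact subset of ℝ³. -/
/-!
The wall is the image of the continuous map `(z, φ, s) ↦ (r cos φ, r sin φ, z)`, with
`r = |φ|/π · s + 2`, on the set of parameters with `0 < z ≤ m`, `|φ| ≤ π` and `s = sin (πp/z)`.
That set is not closed, but multiplying the constraint by `z` gives the closed condition
`z s = z sin (πp/z)`, since `z ↦ z sin (πp/z)` extends continuously by `0` at `z = 0`.
The extra parameters `z = 0`, `|s| ≤ 1` have radius `1 ≤ r ≤ 3` and land in the pedestal, so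
`HV(m,p)` is the union of the compact pedestal and a continuous image of a compact set.
-/

open Real Set

noncomputable section

/-- The pedestal of a harmonic vase: the disc of radius 3 in the plane `z = 0`. -/
def HVpedestal : Set (ℝ × ℝ × ℝ) :=
  {q | q.1 ^ 2 + q.2.1 ^ 2 ≤ 9 ∧ q.2.2 = 0}

/-- The wall of the harmonic vase `HV(m,p)`. -/
def HVwall (m p : ℝ) : Set (ℝ × ℝ × ℝ) :=
  {q | ∃ z ∈ Set.Ioc (0 : ℝ) m, ∃ φ ∈ Set.Icc (-π) π,
    q = ((|φ| / π * Real.sin (π * p / z) + 2) * Real.cos φ,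
         (|φ| / π * Real.sin (π * p / z) + 2) * Real.sin φ, z)}

/-- The harmonic vase `HV(m,p)` as a subset of `ℝ³`. -/
def HV (m p : ℝ) : Set (ℝ × ℝ × ℝ) := HVpedestal ∪ HVwall m p

open Filter Topology

theorem continuous_mul_sin_div (c : ℝ) : Continuous fun z : ℝ => z * sin (c / z) := by
  refine continuous_iff_continuousAt.2 fun z => ?_
  rcases eq_or_ne z 0 with rfl | hz
  · have hbdd : IsBoundedUnder (· ≤ ·) (𝓝 (0 : ℝ)) fun t => ‖sin (c / t)‖ :=
      isBoundedUnder_of ⟨1, fun t => by simpa using abs_sin_le_one (c / t)⟩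
    simpa [ContinuousAt] using (tendsto_id (x := 𝓝 (0 : ℝ))).zero_mul_isBoundedUnder_le hbdd
  · exact continuousAt_id.mul (continuous_sin.continuousAt.comp
      (continuousAt_const.div continuousAt_id hz))

theorem sq_mul_cos_add_sq_mul_sin (r φ : ℝ) : (r * cos φ) ^ 2 + (r * sin φ) ^ 2 = r ^ 2 := by
  rw [mul_pow, mul_pow, ← mul_add, cos_sq_add_sin_sq, mul_one]

theorem isCompact_HVpedestal : IsCompact HVpedestal := by
  have hclosed : IsClosed HVpedestal := by
    rw [HVpedestal, ofPred_and]
    exact (isClosed_le (by fun_prop) continuous_const).inter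
      (isClosed_eq (by fun_prop) continuous_const)
  refine (isCompact_Icc (a := ((-3 : ℝ), (-3 : ℝ), (-3 : ℝ))) (b := (3, 3, 3))).of_isClosed_subset
    hclosed ?_
  rintro ⟨x, y, z⟩ ⟨hxy, rfl⟩
  simp only [mem_Icc, Prod.mk_le_mk]
  refine ⟨⟨?_, ?_, ?_⟩, ?_, ?_, ?_⟩ <;> nlinarith

def vaseRadius (φ s : ℝ) : ℝ := |φ| / π * s + 2

theorem vaseRadius_mem_Icc {φ s : ℝ} (hφ : φ ∈ Icc (-π) π) (hs : s ∈ Icc (-1) 1) :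
    vaseRadius φ s ∈ Icc 1 3 := by
  have h0 : 0 ≤ |φ| / π := by positivity
  have h1 : |φ| / π ≤ 1 := (div_le_one pi_pos).2 (abs_le.2 hφ)
  constructor <;> unfold vaseRadius <;> nlinarith [hs.1, hs.2]

def vaseMap (q : ℝ × ℝ × ℝ) : ℝ × ℝ × ℝ :=
  (vaseRadius q.2.1 q.2.2 * cos q.2.1, vaseRadius q.2.1 q.2.2 * sin q.2.1, q.1)

theorem continuous_vaseMap : Continuous vaseMap := by
  unfold vaseMap vaseRadius
  fun_prop

def vaseParams (m p : ℝ) : Set (ℝ × ℝ × ℝ) :=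
  Icc (0, -π, -1) (m, π, 1) ∩ {q | q.1 * q.2.2 = q.1 * sin (π * p / q.1)}

theorem isCompact_vaseParams (m p : ℝ) : IsCompact (vaseParams m p) :=
  isCompact_Icc.inter_right
    (isClosed_eq (by fun_prop) ((continuous_mul_sin_div (π * p)).comp continuous_fst))

theorem HVwall_subset_image_vaseParams (m p : ℝ) : HVwall m p ⊆ vaseMap '' vaseParams m p := by
  rintro _ ⟨z, ⟨hz0, hzm⟩, φ, hφ, rfl⟩
  refine ⟨(z, φ, sin (π * p / z)), ⟨?_, rfl⟩, rfl⟩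
  simp only [mem_Icc, Prod.mk_le_mk]
  exact ⟨⟨hz0.le, hφ.1, neg_one_le_sin _⟩, hzm, hφ.2, sin_le_one _⟩

theorem image_vaseParams_subset_HV (m p : ℝ) : vaseMap '' vaseParams m p ⊆ HV m p := by
  rintro _ ⟨⟨z, φ, s⟩, ⟨hbox, hzs⟩, rfl⟩
  simp only [mem_Icc, Prod.mk_le_mk] at hbox
  obtain ⟨⟨hz0, hφ₁, hs₁⟩, hzm, hφ₂, hs₂⟩ := hbox
  rcases hz0.eq_or_lt with rfl | hz
  · have hr := vaseRadius_mem_Icc ⟨hφ₁, hφ₂⟩ ⟨hs₁, hs₂⟩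
    refine Or.inl ⟨?_, rfl⟩
    rw [vaseMap, sq_mul_cos_add_sq_mul_sin]
    nlinarith [hr.1, hr.2]
  · have hs : s = sin (π * p / z) := mul_left_cancel₀ hz.ne' hzs
    exact Or.inr ⟨z, ⟨hz, hzm⟩, φ, ⟨hφ₁, hφ₂⟩, by rw [hs]; rfl⟩

theorem HV_eq_union_image (m p : ℝ) : HV m p = HVpedestal ∪ vaseMap '' vaseParams m p :=
  (union_subset subset_union_left (image_vaseParams_subset_HV m p)).antisymm'
    (union_subset_union_right _ (HVwall_subset_image_vaseParams m p))

theorem HV_isCompact_general (m p : ℝ) : IsCompact (HV m p) := by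
  rw [HV_eq_union_image]
  exact isCompact_HVpedestal.union ((isCompact_vaseParams m p).image continuous_vaseMap)

/-- every harmonic vase is compact. -/
theorem HV_isCompact (m p : ℝ) (hm : 0 < m) (hp : 0 < p) : IsCompact (HV m p) :=
  HV_isCompact_general m p
end
end

section
/- Let X be a path-connected topological space and let Y be a locally path-connected topological space. If f : Y → X is continuous, then f is also continuous as a map from Y to P(X), where P(X) is X equipped with the Peano topology. -/
open TopologicalSpace

/-- The Peano topology on `X`: generated by all path components of all open subsets. -/
def peanoTopology (X : Type*) [TopologicalSpace X] : TopologicalSpace X :=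
  TopologicalSpace.generateFrom
    {C | ∃ (U : Set X) (x : X), IsOpen U ∧ x ∈ U ∧ C = pathComponentIn U x}

/-- The universal Peano space of `X`: the same underlying set with the Peano topology. -/
def Peanify (X : Type*) [TopologicalSpace X] : Type _ := X

instance (X : Type*) [TopologicalSpace X] : TopologicalSpace (Peanify X) :=
  peanoTopology X

/-- The identity of the underlying set, viewed as a map `X → P(X)`. -/
def toPeanify (X : Type*) [TopologicalSpace X] : X → Peanify X := id

/-! A subbasic open set of `P(X)` is a path component `C` of an open `U ⊆ X`. Near a point `y`
of `f⁻¹ C`, the path component of `y` in the open set `f⁻¹ U` is open because `Y` is locally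
path-connected, and `f` maps it onto a path-connected subset of `U` through `f y ∈ C`, hence
into `C`. So `f⁻¹ C` is open. -/

section

variable {X Y : Type*} [TopologicalSpace X] [TopologicalSpace Y] {f : Y → X}

theorem Continuous.mapsTo_pathComponentIn (hf : Continuous f) {U : Set X} {y : Y}
    (hy : f y ∈ U) : Set.MapsTo f (pathComponentIn (f ⁻¹' U) y) (pathComponentIn U (f y)) := by
  have hy' : y ∈ f ⁻¹' U := hy
  exact Set.mapsTo_iff_image_subset.mpr <|
    ((isPathConnected_pathComponentIn hy').image hf).subset_pathComponentIn
      ⟨y, mem_pathComponentIn_self hy', rfl⟩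
      ((Set.image_mono pathComponentIn_subset).trans (Set.image_preimage_subset f U))

theorem Continuous.isOpen_preimage_pathComponentIn [LocallyPathConnectedSpace Y]
    (hf : Continuous f) {U : Set X} (hU : IsOpen U) (x : X) :
    IsOpen (f ⁻¹' pathComponentIn U x) := by
  refine isOpen_iff_mem_nhds.mpr fun y hy ↦ ?_
  have hfy : f y ∈ U := pathComponentIn_subset hy
  have hnhds : pathComponentIn (f ⁻¹' U) y ∈ nhds y :=
    ((hU.preimage hf).pathComponentIn y).mem_nhds (mem_pathComponentIn_self hfy)
  refine Filter.mem_of_superset hnhds ?_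
  have hC : pathComponentIn U (f y) = pathComponentIn U x := pathComponentIn_congr hy
  rw [← hC]
  exact (hf.mapsTo_pathComponentIn hfy).subset_preimage

end

theorem continuous_toPeanify_comp_general {X Y : Type*} [TopologicalSpace X] [TopologicalSpace Y]
    [LocallyPathConnectedSpace Y] (f : Y → X) (hf : Continuous f) :
    Continuous (fun y => toPeanify X (f y)) := by
  refine continuous_generateFrom_iff.mpr ?_
  rintro _ ⟨U, x, hU, -, rfl⟩
  exact hf.isOpen_preimage_pathComponentIn hU x

/-- a continuous map from a locally path-connected space `Y` to a
path-connected space `X` is continuous into the universal Peano space `P(X)`. -/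
theorem continuous_toPeanify_comp {X Y : Type*} [TopologicalSpace X] [TopologicalSpace Y]
    [PathConnectedSpace X] [LocallyPathConnectedSpace Y] (f : Y → X) (hf : Continuous f) :
    Continuous (fun y => toPeanify X (f y)) :=
  continuous_toPeanify_comp_general f hf
end

section
/- Let X be a path-connected topological space and let Y be a locally path-connected topological space. The map that sends a continuous map g : Y → P(X) to the same underlying function viewed as a continuous map Y → X induces a well-defined bijection from the set of homotopy classes of continuous maps Y → P(X) to the set of homotopy classes of continuous maps Y → X. -/
open TopologicalSpace

/-- The universal Peano map `P(X) → X` (the identity on underlying sets), as a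
continuous map. -/
def ofPeanifyCM (X : Type*) [TopologicalSpace X] : C(Peanify X, X) where
  toFun := fun x => (x : X)
  continuous_toFun := by
    refine continuous_def.mpr ?_
    intro U hU
    show TopologicalSpace.GenerateOpen _ U
    have hrw : U = ⋃₀ {C : Set X | ∃ x ∈ U, C = pathComponentIn U x} := by
      ext y
      constructor
      · intro hy
        exact ⟨pathComponentIn U y, ⟨y, hy, rfl⟩, mem_pathComponentIn_self hy⟩
      · rintro ⟨C, ⟨x, hx, rfl⟩, hy⟩
        exact pathComponentIn_subset hy
    rw [hrw]
    apply TopologicalSpace.GenerateOpen.sUnion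
    rintro C ⟨x, hx, rfl⟩
    exact TopologicalSpace.GenerateOpen.basic _ ⟨U, x, hU, hx, rfl⟩

/-!
A map from a locally path-connected space `Z` into `X` is automatically continuous into `P(X)`:
if `f z` lies in the path component `C` of an open `U`, then the path component of `z` in the
open set `f⁻¹(U)` is a neighbourhood of `z` mapped into `C`. Since `Y` and `Y × [0,1]` are locally
path connected, maps `Y → X` and homotopies between them lift to `P(X)` along the identity, which
gives the inverse on homotopy classes.
-/

instance : LocallyPathConnectedSpace unitInterval :=
  (convex_Icc (0 : ℝ) 1).locallyPathConnectedSpace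

theorem continuous_toPeanify {Z X : Type*} [TopologicalSpace Z] [TopologicalSpace X]
    [LocallyPathConnectedSpace Z] {f : Z → X} (hf : Continuous f) :
    Continuous (X := Z) (Y := Peanify X) f := by
  refine continuous_generateFrom_iff.mpr ?_
  rintro _ ⟨U, x, hU, -, rfl⟩
  refine isOpen_iff_mem_nhds.mpr fun z hz => ?_
  have hzU : f z ∈ U := pathComponentIn_subset hz
  refine Filter.mem_of_superset
    (((hU.preimage hf).pathComponentIn z).mem_nhds (mem_pathComponentIn_self hzU)) fun w hw => ?_
  show f w ∈ pathComponentIn U x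
  rw [← pathComponentIn_congr hz]
  exact (hw.map hf).mono (Set.image_preimage_subset f U)

namespace ContinuousMap

variable {Z X : Type*} [TopologicalSpace Z] [TopologicalSpace X] [LocallyPathConnectedSpace Z]

def liftPeanify (f : C(Z, X)) : C(Z, Peanify X) :=
  ⟨f, continuous_toPeanify f.continuous⟩

theorem Homotopic.liftPeanify {f g : C(Z, X)} (h : f.Homotopic g) :
    f.liftPeanify.Homotopic g.liftPeanify :=
  let ⟨H⟩ := h
  ⟨{ toContinuousMap := H.toContinuousMap.liftPeanify
     map_zero_left := H.apply_zero
     map_one_left := H.apply_one }⟩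

end ContinuousMap

theorem peanify_homotopyClasses_bijective_general (X Y : Type*) [TopologicalSpace X]
    [TopologicalSpace Y] [LocallyPathConnectedSpace Y] :
    Function.Bijective
      (Quot.map (fun g : C(Y, Peanify X) => (ofPeanifyCM X).comp g)
        (fun _ _ h => ContinuousMap.Homotopic.comp (ContinuousMap.Homotopic.refl _) h) :
        Quot (ContinuousMap.Homotopic (X := Y) (Y := Peanify X)) →
          Quot (ContinuousMap.Homotopic (X := Y) (Y := X))) := by
  refine Function.bijective_iff_has_inverse.mpr
    ⟨Quot.map ContinuousMap.liftPeanify fun _ _ => ContinuousMap.Homotopic.liftPeanify,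
      ?_, ?_⟩
  · exact Quot.ind fun _ => rfl
  · exact Quot.ind fun _ => rfl

/-- for `X` path connected and `Y` locally path connected, composition with
the universal Peano map induces a bijection `[Y, P(X)] → [Y, X]` on homotopy classes. -/
theorem peanify_homotopyClasses_bijective (X Y : Type*) [TopologicalSpace X]
    [TopologicalSpace Y] [PathConnectedSpace X] [LocallyPathConnectedSpace Y] :
    Function.Bijective
      (Quot.map (fun g : C(Y, Peanify X) => (ofPeanifyCM X).comp g)
        (fun _ _ h => ContinuousMap.Homotopic.comp (ContinuousMap.Homotopic.refl _) h) :
        Quot (ContinuousMap.Homotopic (X := Y) (Y := Peanify X)) →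
          Quot (ContinuousMap.Homotopic (X := Y) (Y := X))) :=
  peanify_homotopyClasses_bijective_general X Y
end

section
/- For all m, p > 0, the inclusion of the top edge T = {(r·cos φ, r·sin φ, m) : φ ∈ [−π,π], r = (|φ|/π)·sin(πp/m) + 2} into HV(m,p) induces an isomorphism of fundamental groups π₁(T, z_m) ≅ π₁(HV(m,p), z_m), where z_m = (2,0,m). -/
/-!
Away from the pedestal the wall is a product of the top edge with `(0, m]`: moving every point
along its meridian to height `m` retracts it onto the top edge. The pedestal is the difficulty.
Since `sin (π * p / z)` oscillates as `z → 0`, the closure of the wall meets the pedestal in a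
whole annulus, but, as for the topologist's sine curve, a connected set meeting the wall can only
reach the pedestal at the junction `(2, 0, 0)`, the foot of the seam `φ = 0`. So collapsing the
pedestal to the junction and then lifting to height `m` is a retraction of `HV(m,p)` onto the top
edge that, although discontinuous, is continuous along every path and every homotopy. Applied to
homotopies it gives injectivity on `π₁`; contracting the pedestal parts of a loop and then
lifting it gives surjectivity.
-/

open Real Set

noncomputable section

/-- The top edge of the harmonic vase `HV(m,p)`: its intersection with the plane
`z = m`. -/
def HVtop (m p : ℝ) : Set (ℝ × ℝ × ℝ) :=
  {q | ∃ φ ∈ Set.Icc (-π) π,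
    q = ((|φ| / π * Real.sin (π * p / m) + 2) * Real.cos φ,
         (|φ| / π * Real.sin (π * p / m) + 2) * Real.sin φ, m)}

attribute [local instance] Path.Homotopic.setoid

/-- The class of a loop in the fundamental group. -/
def loopClass {A : Type u} [TopologicalSpace A] {a : A} (γ : Path a a) :
    FundamentalGroup A a :=
  FundamentalGroup.fromPath (X := TopCat.of A) ⟦γ⟧

open unitInterval

section LoopClass

variable {A B : Type*} [TopologicalSpace A] [TopologicalSpace B] {a : A}

theorem loopClass_eq_loopClass_iff {γ γ' : Path a a} :
    loopClass γ = loopClass γ' ↔ γ.Homotopic γ' :=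
  Quotient.eq

theorem exists_loopClass_eq (g : FundamentalGroup A a) : ∃ γ : Path a a, loopClass γ = g :=
  Quotient.exists_rep g

theorem map_loopClass (f : C(A, B)) (γ : Path a a) :
    FundamentalGroup.map f a (loopClass γ) = loopClass (γ.map f.continuous) :=
  rfl

end LoopClass

section Subspace

variable {E : Type*} [TopologicalSpace E] {S : Set E} {a b : S}

def pathOfMem (f : I → E) (hf : Continuous f) (hS : ∀ t, f t ∈ S) (h0 : f 0 = a)
    (h1 : f 1 = b) : Path a b where
  toFun t := ⟨f t, hS t⟩
  continuous_toFun := hf.subtype_mk hS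
  source' := Subtype.ext h0
  target' := Subtype.ext h1

theorem Path.homotopic_of_continuous {γ₀ γ₁ : Path a b} (H : I × I → E) (hH : Continuous H)
    (hS : ∀ x, H x ∈ S) (h0 : ∀ s, H (0, s) = γ₀ s) (h1 : ∀ s, H (1, s) = γ₁ s)
    (hends : ∀ t, H (t, 0) = a ∧ H (t, 1) = b) : γ₀.Homotopic γ₁ :=
  ⟨{ toFun x := ⟨H x, hS x⟩
     continuous_toFun := hH.subtype_mk hS
     map_zero_left s := Subtype.ext (h0 s)
     map_one_left s := Subtype.ext (h1 s)
     prop' t s hs := by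
       rcases hs with rfl | rfl
       · exact Subtype.ext ((hends t).1.trans (congrArg Subtype.val γ₀.source).symm)
       · exact Subtype.ext ((hends t).2.trans (congrArg Subtype.val γ₀.target).symm) }⟩

end Subspace

theorem Real.arccos_cos_eq_abs {φ : ℝ} (hφ : φ ∈ Icc (-π) π) : arccos (cos φ) = |φ| := by
  rw [← cos_abs, arccos_cos (abs_nonneg φ) (abs_le.2 hφ)]

instance unitInterval.locallyConnectedSpace : LocallyConnectedSpace I :=
  haveI := (convex_Icc (0 : ℝ) 1).locallyPathConnectedSpace
  inferInstance

theorem exists_mem_Ioc_sin_div_eq {c z s : ℝ} (hc : 0 < c) (hz : 0 < z) (hs : s ∈ Icc (-1) 1) :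
    ∃ h ∈ Ioc 0 z, sin (c / h) = s := by
  obtain ⟨n, hn⟩ := exists_nat_ge (c / (2 * π * z) + 1)
  have hθ := neg_pi_div_two_le_arcsin s
  have hcz : c ≤ z * (arcsin s + n * (2 * π)) := by
    have hk : c / (2 * π * z) * (2 * π * z) = c := div_mul_cancel₀ _ (by positivity)
    have h1 := mul_le_mul_of_nonneg_left hn (by positivity : 0 ≤ 2 * π * z)
    have h2 := mul_le_mul_of_nonneg_left hθ hz.le
    nlinarith [pi_pos]
  have hpos : 0 < arcsin s + n * (2 * π) := by
    nlinarith [pi_pos]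
  refine ⟨c / (arcsin s + n * (2 * π)), ⟨by positivity, ?_⟩, ?_⟩
  · rwa [div_le_iff₀ hpos]
  · rw [div_div_cancel₀ hc.ne', sin_add_nat_mul_two_pi, sin_arcsin hs.1 hs.2]

theorem continuous_mul_sin_div_s7 {X : Type*} [TopologicalSpace X] {f h : X → ℝ} (c : ℝ)
    (hf : Continuous f) (hh : Continuous h) (hzero : ∀ x, h x = 0 → f x = 0) :
    Continuous fun x => f x * sin (c / h x) := by
  refine continuous_iff_continuousAt.2 fun x => ?_
  by_cases hx : h x = 0
  · have hf0 : Filter.Tendsto f (nhds x) (nhds 0) := hzero x hx ▸ hf.continuousAt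
    rw [ContinuousAt, hzero x hx, zero_mul]
    exact hf0.zero_mul_isBoundedUnder_le
      (Filter.isBoundedUnder_of ⟨1, fun y => (norm_eq_abs _).trans_le (abs_sin_le_one _)⟩)
  · exact hf.continuousAt.mul
      (continuous_sin.continuousAt.comp (continuousAt_const.div hh.continuousAt hx))

namespace HarmonicVase

variable {m p z φ s t : ℝ} {q : ℝ × ℝ × ℝ}

def radius (φ s : ℝ) : ℝ := |φ| / π * s + 2

def vasePoint (p z φ : ℝ) : ℝ × ℝ × ℝ :=
  (radius φ (sin (π * p / z)) * cos φ, radius φ (sin (π * p / z)) * sin φ, z)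

/-- The horizontal cross-section of the wall at any height `z` with `sin (π * p / z) = s`. -/
def profile (s : ℝ) : Set (ℝ × ℝ) :=
  (fun φ => (radius φ s * cos φ, radius φ s * sin φ)) '' Icc (-π) π

def junction : ℝ × ℝ × ℝ := (2, 0, 0)

/-- The wall together with the only point of the pedestal reachable from it by a path. -/
def wallPlus (m p : ℝ) : Set (ℝ × ℝ × ℝ) := HVwall m p ∪ {junction}

def radial (q : ℝ × ℝ × ℝ) : ℝ := √(q.1 ^ 2 + q.2.1 ^ 2)

/-- Moves `q` along its meridian of the wall to height `h`; the angle `|φ|` of `q` is recovered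
as an `arccos`, its direction as `(q.1, q.2.1) / radial q`. -/
def lift (p : ℝ) (q : ℝ × ℝ × ℝ) (h : ℝ) : ℝ × ℝ × ℝ :=
  (radius (arccos (q.1 / radial q)) (sin (π * p / h)) * (q.1 / radial q),
   radius (arccos (q.1 / radial q)) (sin (π * p / h)) * (q.2.1 / radial q), h)

def pinch (t : ℝ) (q : ℝ × ℝ × ℝ) : ℝ × ℝ × ℝ :=
  if q.2.2 = 0 then junction + (1 - t) • (q - junction) else q

def ascend (m p t : ℝ) (q : ℝ × ℝ × ℝ) : ℝ × ℝ × ℝ :=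
  lift p q ((1 - t) * q.2.2 + t * m)

theorem one_le_radius (hφ : φ ∈ Icc (-π) π) (hs : s ∈ Icc (-1) 1) : 1 ≤ radius φ s := by
  have hφπ : |φ| / π ≤ 1 := (div_le_one pi_pos).2 (abs_le.2 hφ)
  have : 0 ≤ |φ| / π := by positivity
  unfold radius
  nlinarith [hs.1, hs.2]

theorem junction_eq_vasePoint : junction = vasePoint p 0 0 := by
  simp [junction, vasePoint, radius]

theorem vasePoint_mem_HV (hz : z ∈ Icc 0 m) (hφ : φ ∈ Icc (-π) π) (h0 : z = 0 → φ = 0) :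
    vasePoint p z φ ∈ HV m p := by
  rcases hz.1.eq_or_lt with rfl | hz0
  · rw [h0 rfl, ← junction_eq_vasePoint]
    left
    norm_num [HVpedestal, junction]
  · exact Or.inr ⟨z, ⟨hz0, hz.2⟩, φ, hφ, rfl⟩

theorem radial_vasePoint (hφ : φ ∈ Icc (-π) π) :
    radial (vasePoint p z φ) = radius φ (sin (π * p / z)) := by
  have hr := one_le_radius hφ (sin_mem_Icc (π * p / z))
  have hsq : (radius φ (sin (π * p / z)) * cos φ) ^ 2 + (radius φ (sin (π * p / z)) * sin φ) ^ 2
      = radius φ (sin (π * p / z)) ^ 2 := by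
    linear_combination (radius φ (sin (π * p / z))) ^ 2 * sin_sq_add_cos_sq φ
  simp only [radial, vasePoint]
  rw [hsq, sqrt_sq (by linarith)]

theorem lift_vasePoint (hφ : φ ∈ Icc (-π) π) (h : ℝ) :
    lift p (vasePoint p z φ) h = vasePoint p h φ := by
  have hr := one_le_radius hφ (sin_mem_Icc (π * p / z))
  rw [lift, radial_vasePoint hφ]
  simp only [vasePoint]
  rw [mul_div_cancel_left₀ _ (by linarith), mul_div_cancel_left₀ _ (by linarith),
    arccos_cos_eq_abs hφ]
  simp [radius]

theorem isClosed_profile (s : ℝ) : IsClosed (profile s) :=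
  (isCompact_Icc.image (by unfold radius; fun_prop)).isClosed

theorem mem_profile_of_mem_wall (hq : q ∈ HVwall m p) :
    (q.1, q.2.1) ∈ profile (sin (π * p / q.2.2)) := by
  obtain ⟨z, -, φ, hφ, rfl⟩ := hq
  exact ⟨φ, hφ, rfl⟩

/-- Points of `profile 1` have norm `≥ 2`, points of `profile (-1)` norm `≤ 2`. -/
theorem profile_one_inter_profile_neg_one : profile 1 ∩ profile (-1) ⊆ {(2, 0)} := by
  rintro _ ⟨⟨φ, hφ, rfl⟩, ⟨ψ, hψ, hψφ⟩⟩
  simp only [Prod.mk.injEq] at hψφ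
  have hsq : radius ψ (-1) ^ 2 = radius φ 1 ^ 2 := by
    linear_combination -(radius ψ (-1)) ^ 2 * sin_sq_add_cos_sq ψ
      + (radius φ 1) ^ 2 * sin_sq_add_cos_sq φ + (radius ψ (-1) * cos ψ + radius φ 1 * cos φ)
      * hψφ.1 + (radius ψ (-1) * sin ψ + radius φ 1 * sin φ) * hψφ.2
  have hψ1 := one_le_radius hψ (s := -1) (by norm_num)
  have hφ0 : |φ| / π = 0 := by
    have : 0 ≤ |φ| / π := by positivity
    have : 0 ≤ |ψ| / π := by positivity
    simp only [radius] at hsq hψ1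
    nlinarith
  have : φ = 0 := by simpa [pi_ne_zero] using hφ0
  subst this
  simp [radius]

@[simp] theorem vasePoint_z : (vasePoint p z φ).2.2 = z := rfl

theorem z_pos_of_mem_wall (hq : q ∈ HVwall m p) : 0 < q.2.2 := by
  obtain ⟨z, hz, φ, -, rfl⟩ := hq
  exact hz.1

theorem z_nonneg_of_mem_HV (hq : q ∈ HV m p) : 0 ≤ q.2.2 :=
  hq.elim (fun h => h.2.ge) fun h => (z_pos_of_mem_wall h).le

theorem mem_wall_of_mem_HV (hq : q ∈ HV m p) (hz : q.2.2 ≠ 0) : q ∈ HVwall m p :=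
  hq.resolve_left fun h => hz h.2

theorem mem_pedestal_of_mem_HV (hq : q ∈ HV m p) (hz : q.2.2 = 0) : q ∈ HVpedestal :=
  hq.resolve_right fun h => (z_pos_of_mem_wall h).ne' hz

theorem z_eq_of_mem_top (hq : q ∈ HVtop m p) : q.2.2 = m := by
  obtain ⟨φ, -, rfl⟩ := hq
  rfl

theorem top_subset_HV (hm : 0 < m) : HVtop m p ⊆ HV m p := by
  rintro _ ⟨φ, hφ, rfl⟩
  exact Or.inr ⟨m, ⟨hm, le_rfl⟩, φ, hφ, rfl⟩

theorem wallPlus_subset_HV : wallPlus m p ⊆ HV m p := by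
  rintro q (hq | rfl)
  · exact Or.inr hq
  · left
    norm_num [HVpedestal, junction]

/-- As for the topologist's sine curve: a connected neighbourhood of `x₀` is mapped through every
height in some `[0, z₁]`, hence through heights where `sin (π * p / z) = ±1`, so `F x₀` lies over
both `profile 1` and `profile (-1)`. -/
theorem eq_junction_of_mem_closure {X : Type*} [TopologicalSpace X] [LocallyConnectedSpace X]
    (hp : 0 < p) {F : X → ℝ × ℝ × ℝ} (hF : Continuous F) (hmem : ∀ x, F x ∈ HV m p) {x₀ : X}
    (hx₀ : x₀ ∈ closure {x | (F x).2.2 ≠ 0}) (h0 : (F x₀).2.2 = 0) : F x₀ = junction := by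
  have hprofile : ∀ s ∈ Icc (-1 : ℝ) 1, ((F x₀).1, (F x₀).2.1) ∈ profile s := by
    intro s hs
    refine (isClosed_profile s).closure_subset (mem_closure_iff_nhds.2 fun V hV => ?_)
    have hV' : (fun x => ((F x).1, (F x).2.1)) ⁻¹' V ∈ nhds x₀ :=
      (by fun_prop : Continuous fun x => ((F x).1, (F x).2.1)).continuousAt.preimage_mem_nhds hV
    obtain ⟨W, hW, hWconn, hWV⟩ := locallyConnectedSpace_iff_connected_subsets.1 ‹_› x₀ _ hV'
    obtain ⟨x₁, hx₁W, hx₁⟩ := mem_closure_iff_nhds.1 hx₀ W hW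
    have hz₁ : 0 < (F x₁).2.2 := (z_nonneg_of_mem_HV (hmem x₁)).lt_of_ne' hx₁
    obtain ⟨h, hh, hsin⟩ := exists_mem_Ioc_sin_div_eq (mul_pos pi_pos hp) hz₁ hs
    have hheights : Icc 0 (F x₁).2.2 ⊆ (fun x => (F x).2.2) '' W :=
      (hWconn.image _ (by fun_prop : Continuous fun x => (F x).2.2).continuousOn).ordConnected.out
        ⟨x₀, mem_of_mem_nhds hW, h0⟩ ⟨x₁, hx₁W, rfl⟩
    obtain ⟨x, hxW, hxh : (F x).2.2 = h⟩ := hheights ⟨hh.1.le, hh.2⟩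
    refine ⟨_, hWV hxW, ?_⟩
    have := mem_profile_of_mem_wall (mem_wall_of_mem_HV (hmem x) (hxh ▸ hh.1.ne'))
    rwa [hxh, hsin] at this
  have hxy := profile_one_inter_profile_neg_one
    ⟨hprofile 1 (by norm_num), hprofile (-1) (by norm_num)⟩
  simp only [mem_singleton_iff, Prod.mk.injEq] at hxy
  exact Prod.ext hxy.1 (Prod.ext hxy.2 h0)

theorem pinch_zero (q : ℝ × ℝ × ℝ) : pinch 0 q = q := by
  unfold pinch
  split_ifs <;> simp

theorem pinch_of_mem_top (hm : 0 < m) (hq : q ∈ HVtop m p) (t : ℝ) : pinch t q = q :=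
  if_neg (by rw [z_eq_of_mem_top hq]; exact hm.ne')

theorem pinch_mem_HV (hq : q ∈ HV m p) (ht : t ∈ Icc 0 1) : pinch t q ∈ HV m p := by
  unfold pinch
  split_ifs with h0
  · have hq9 := (mem_pedestal_of_mem_HV hq h0).1
    have ht' : 0 ≤ 1 - t := sub_nonneg.2 ht.2
    refine Or.inl ⟨?_, by simp [junction, h0]⟩
    simp only [junction, Prod.fst_add, Prod.snd_add, Prod.smul_fst, Prod.smul_snd, Prod.fst_sub,
      Prod.snd_sub, smul_eq_mul]
    nlinarith [mul_nonneg (mul_nonneg ht.1 ht')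
      (add_nonneg (sq_nonneg (q.1 - 2)) (sq_nonneg q.2.1)), mul_nonneg ht' (sub_nonneg.2 hq9), ht.1]
  · exact hq

theorem pinch_one_mem_wallPlus (hq : q ∈ HV m p) : pinch 1 q ∈ wallPlus m p := by
  unfold pinch
  split_ifs with h0
  · right
    simp
  · exact Or.inl (mem_wall_of_mem_HV hq h0)

theorem continuous_pinch {X : Type*} [TopologicalSpace X] [LocallyConnectedSpace X] (hp : 0 < p)
    {F : X → ℝ × ℝ × ℝ} (hF : Continuous F) (hmem : ∀ x, F x ∈ HV m p) {u : X → ℝ}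
    (hu : Continuous u) : Continuous fun x => pinch (u x) (F x) := by
  refine Continuous.if (fun x hx => ?_) (by fun_prop) hF
  rw [frontier_eq_closure_inter_closure,
    (isClosed_eq (by fun_prop) continuous_const).closure_eq] at hx
  rw [eq_junction_of_mem_closure hp hF hmem hx.2 hx.1]
  simp

theorem exists_vasePoint_of_mem_wallPlus (hq : q ∈ wallPlus m p) :
    ∃ z φ, φ ∈ Icc (-π) π ∧ (z = 0 → φ = 0) ∧ q = vasePoint p z φ := by
  rcases hq with ⟨z, hz, φ, hφ, rfl⟩ | rfl
  · exact ⟨z, φ, hφ, fun h => absurd h hz.1.ne', rfl⟩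
  · exact ⟨0, 0, ⟨by linarith [pi_pos], pi_pos.le⟩, fun _ => rfl, junction_eq_vasePoint⟩

theorem z_mem_Icc_of_mem_wallPlus (hm : 0 ≤ m) (hq : q ∈ wallPlus m p) : q.2.2 ∈ Icc 0 m := by
  rcases hq with ⟨z, hz, φ, -, rfl⟩ | rfl
  · exact ⟨hz.1.le, hz.2⟩
  · exact ⟨le_rfl, hm⟩

theorem eq_junction_of_mem_wallPlus (hq : q ∈ wallPlus m p) (hz : q.2.2 = 0) : q = junction :=
  hq.resolve_left fun h => (z_pos_of_mem_wall h).ne' hz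

theorem radial_pos_of_mem_wallPlus (hq : q ∈ wallPlus m p) : 0 < radial q := by
  obtain ⟨z, φ, hφ, -, rfl⟩ := exists_vasePoint_of_mem_wallPlus hq
  rw [radial_vasePoint hφ]
  linarith [one_le_radius hφ (sin_mem_Icc (π * p / z))]

theorem continuous_radial : Continuous radial := by
  unfold radial
  fun_prop

theorem arccos_junction : arccos (junction.1 / radial junction) = 0 := by
  rw [junction_eq_vasePoint (p := 0), radial_vasePoint ⟨by linarith [pi_pos], pi_pos.le⟩]
  simp [vasePoint, radius]

/-- `lift` is continuous even where the height tends to `0`, provided the meridian there is the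
seam `φ = 0`, along which the oscillating factor `sin (π * p / h)` is damped out. -/
theorem continuous_lift {X : Type*} [TopologicalSpace X] {G : X → ℝ × ℝ × ℝ} {h : X → ℝ}
    (hG : Continuous G) (hh : Continuous h) (hG0 : ∀ x, radial (G x) ≠ 0)
    (hdeg : ∀ x, h x = 0 → G x = junction) : Continuous fun x => lift p (G x) (h x) := by
  have hcos : Continuous fun x => (G x).1 / radial (G x) :=
    hG.fst.div (continuous_radial.comp hG) hG0
  have hsin : Continuous fun x => (G x).2.1 / radial (G x) :=
    hG.snd.fst.div (continuous_radial.comp hG) hG0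
  have hosc : Continuous fun x => |arccos ((G x).1 / radial (G x))| / π * sin (π * p / h x) :=
    continuous_mul_sin_div_s7 _ ((continuous_arccos.comp hcos).abs.div_const π) hh
      fun x hx => by simp [hdeg x hx, arccos_junction]
  exact ((hosc.add continuous_const).mul hcos).prodMk
    (((hosc.add continuous_const).mul hsin).prodMk hh)

theorem eq_zero_of_lerp_eq_zero (hm : 0 < m) (ht : t ∈ Icc 0 1) (hz : 0 ≤ z)
    (h : (1 - t) * z + t * m = 0) : z = 0 := by
  have htm : t * m = 0 := by
    nlinarith [mul_nonneg (sub_nonneg.2 ht.2) hz, mul_nonneg ht.1 hm.le]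
  obtain rfl : t = 0 := (mul_eq_zero.1 htm).resolve_right hm.ne'
  simpa using h

theorem continuous_ascend {X : Type*} [TopologicalSpace X] (hm : 0 < m) {G : X → ℝ × ℝ × ℝ}
    (hG : Continuous G) (hW : ∀ x, G x ∈ wallPlus m p) {u : X → ℝ} (hu : Continuous u)
    (hu01 : ∀ x, u x ∈ Icc 0 1) : Continuous fun x => ascend m p (u x) (G x) :=
  continuous_lift hG (by fun_prop) (fun x => (radial_pos_of_mem_wallPlus (hW x)).ne')
    fun x hx => eq_junction_of_mem_wallPlus (hW x)
      (eq_zero_of_lerp_eq_zero hm (hu01 x) (z_mem_Icc_of_mem_wallPlus hm.le (hW x)).1 hx)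

theorem ascend_zero (hq : q ∈ wallPlus m p) : ascend m p 0 q = q := by
  obtain ⟨z, φ, hφ, -, rfl⟩ := exists_vasePoint_of_mem_wallPlus hq
  rw [ascend, lift_vasePoint hφ]
  norm_num

theorem ascend_one_mem_top (hq : q ∈ wallPlus m p) : ascend m p 1 q ∈ HVtop m p := by
  obtain ⟨z, φ, hφ, -, rfl⟩ := exists_vasePoint_of_mem_wallPlus hq
  rw [ascend, lift_vasePoint hφ]
  norm_num
  exact ⟨φ, hφ, rfl⟩

theorem ascend_of_mem_top (hq : q ∈ HVtop m p) (t : ℝ) : ascend m p t q = q := by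
  obtain ⟨φ, hφ, rfl⟩ := hq
  change ascend m p t (vasePoint p m φ) = vasePoint p m φ
  rw [ascend, lift_vasePoint hφ, vasePoint_z, sub_mul, one_mul, sub_add_cancel]

theorem ascend_mem_HV (hm : 0 < m) (hq : q ∈ wallPlus m p) (ht : t ∈ Icc 0 1) :
    ascend m p t q ∈ HV m p := by
  have hz := z_mem_Icc_of_mem_wallPlus hm.le hq
  obtain ⟨z, φ, hφ, h0, rfl⟩ := exists_vasePoint_of_mem_wallPlus hq
  rw [ascend, lift_vasePoint hφ]
  refine vasePoint_mem_HV ⟨?_, ?_⟩ hφ fun h => h0 (eq_zero_of_lerp_eq_zero hm ht hz.1 h)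
  · have := mul_nonneg (sub_nonneg.2 ht.2) hz.1
    have := mul_nonneg ht.1 hm.le
    simp only [vasePoint_z] at *
    linarith
  · simp only [vasePoint_z] at *
    nlinarith [ht.1, ht.2, hz.2]

def topIncl (hm : 0 < m) : C(HVtop m p, HV m p) :=
  ⟨inclusion (top_subset_HV hm), continuous_inclusion _⟩

theorem homotopic_of_map_topIncl_homotopic (hm : 0 < m) (hp : 0 < p) {a b : HVtop m p}
    {τ τ' : Path a b}
    (h : (τ.map (topIncl hm).continuous).Homotopic (τ'.map (topIncl hm).continuous)) :
    τ.Homotopic τ' := by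
  obtain ⟨H⟩ := h
  have hH : Continuous fun x => (H x : ℝ × ℝ × ℝ) := continuous_subtype_val.comp H.continuous
  have hmem x : (H x : ℝ × ℝ × ℝ) ∈ HV m p := (H x).2
  have hW x : pinch 1 (H x : ℝ × ℝ × ℝ) ∈ wallPlus m p := pinch_one_mem_wallPlus (hmem x)
  have hretract {q} (hq : q ∈ HVtop m p) : ascend m p 1 (pinch 1 q) = q := by
    rw [pinch_of_mem_top hm hq, ascend_of_mem_top hq]
  refine Path.homotopic_of_continuous (fun x => ascend m p 1 (pinch 1 (H x)))
    (continuous_ascend hm (continuous_pinch hp hH hmem continuous_const) hW continuous_const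
      fun _ => ⟨zero_le_one, le_rfl⟩)
    (fun x => ascend_one_mem_top (hW x)) (fun s => ?_) (fun s => ?_) fun t => ⟨?_, ?_⟩
  · rw [H.apply_zero]; exact hretract (τ s).2
  · rw [H.apply_one]; exact hretract (τ' s).2
  · rw [H.source]; exact hretract a.2
  · rw [H.target]; exact hretract b.2

theorem exists_homotopic_map_topIncl (hm : 0 < m) (hp : 0 < p) {a b : HVtop m p}
    (γ : Path (topIncl hm a) (topIncl hm b)) :
    ∃ τ : Path a b, γ.Homotopic (τ.map (topIncl hm).continuous) := by
  have hγ : Continuous fun s => (γ s : ℝ × ℝ × ℝ) := continuous_subtype_val.comp γ.continuous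
  have hmem s : (γ s : ℝ × ℝ × ℝ) ∈ HV m p := (γ s).2
  have hW s : pinch 1 (γ s : ℝ × ℝ × ℝ) ∈ wallPlus m p := pinch_one_mem_wallPlus (hmem s)
  have hpinch : Continuous fun x : I × I => pinch x.1 (γ x.2 : ℝ × ℝ × ℝ) :=
    continuous_pinch hp (hγ.comp continuous_snd) (fun x => hmem x.2) continuous_subtype_val.fst'
  have hcollapse : Continuous fun s => pinch 1 (γ s : ℝ × ℝ × ℝ) :=
    continuous_pinch hp hγ hmem continuous_const
  have hascend : Continuous fun x : I × I => ascend m p x.1 (pinch 1 (γ x.2 : ℝ × ℝ × ℝ)) :=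
    continuous_ascend hm (hcollapse.comp continuous_snd) (fun x => hW x.2)
      continuous_subtype_val.fst' fun x => x.1.2
  have hγ0 : (γ 0 : ℝ × ℝ × ℝ) = a := congrArg Subtype.val γ.source
  have hγ1 : (γ 1 : ℝ × ℝ × ℝ) = b := congrArg Subtype.val γ.target
  have hpinch_ends (t : ℝ) : pinch t (γ 0 : ℝ × ℝ × ℝ) = a ∧ pinch t (γ 1 : ℝ × ℝ × ℝ) = b := by
    rw [hγ0, hγ1]
    exact ⟨pinch_of_mem_top hm a.2 t, pinch_of_mem_top hm b.2 t⟩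
  have hascend_ends (t : ℝ) : ascend m p t (pinch 1 (γ 0 : ℝ × ℝ × ℝ)) = a ∧
      ascend m p t (pinch 1 (γ 1 : ℝ × ℝ × ℝ)) = b := by
    rw [(hpinch_ends 1).1, (hpinch_ends 1).2]
    exact ⟨ascend_of_mem_top a.2 t, ascend_of_mem_top b.2 t⟩
  let γ₁ : Path (topIncl hm a) (topIncl hm b) :=
    pathOfMem (fun s => pinch 1 (γ s : ℝ × ℝ × ℝ)) hcollapse (fun s => wallPlus_subset_HV (hW s))
      (hpinch_ends 1).1 (hpinch_ends 1).2
  let τ : Path a b :=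
    pathOfMem (fun s => ascend m p 1 (pinch 1 (γ s : ℝ × ℝ × ℝ)))
      (continuous_ascend hm hcollapse hW continuous_const fun _ => ⟨zero_le_one, le_rfl⟩)
      (fun s => ascend_one_mem_top (hW s))
      (hascend_ends 1).1 (hascend_ends 1).2
  have hA : γ.Homotopic γ₁ :=
    Path.homotopic_of_continuous _ hpinch (fun x => pinch_mem_HV (hmem x.2) x.1.2)
      (fun s => pinch_zero _) (fun s => rfl) fun t => hpinch_ends t
  have hB : γ₁.Homotopic (τ.map (topIncl hm).continuous) :=
    Path.homotopic_of_continuous _ hascend (fun x => ascend_mem_HV hm (hW x.2) x.1.2)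
      (fun s => ascend_zero (hW s)) (fun s => rfl) fun t => hascend_ends t
  exact ⟨τ, hA.trans hB⟩

end HarmonicVase

open HarmonicVase in
/-- the inclusion of the top edge of `HV(m,p)` into `HV(m,p)` induces an
isomorphism of fundamental groups based at `z_m = (2,0,m)`: there is an isomorphism
sending the class of any loop in the top edge to the class of the same loop viewed
in `HV(m,p)`. -/
theorem HV_topEdge_pi1_iso (m p : ℝ) (hm : 0 < m) (hp : 0 < p)
    (zT : HVtop m p) (zH : HV m p)
    (hT : (zT : ℝ × ℝ × ℝ) = (2, 0, m)) (hH : (zH : ℝ × ℝ × ℝ) = (2, 0, m)) :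
    ∃ e : FundamentalGroup (HVtop m p) zT ≃* FundamentalGroup (HV m p) zH,
      ∀ (γ : Path zT zT) (γ' : Path zH zH),
        (∀ t, (γ t : ℝ × ℝ × ℝ) = (γ' t : ℝ × ℝ × ℝ)) →
          e (loopClass γ) = loopClass γ' := by
  obtain rfl : zH = topIncl hm zT := Subtype.ext (hH.trans hT.symm)
  have hinj : Function.Injective (FundamentalGroup.map (topIncl hm) zT) := by
    intro g g' hgg'
    obtain ⟨τ, rfl⟩ := exists_loopClass_eq g
    obtain ⟨τ', rfl⟩ := exists_loopClass_eq g'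
    rw [map_loopClass, map_loopClass, loopClass_eq_loopClass_iff] at hgg'
    exact loopClass_eq_loopClass_iff.2 (homotopic_of_map_topIncl_homotopic hm hp hgg')
  have hsurj : Function.Surjective (FundamentalGroup.map (topIncl hm) zT) := by
    intro g
    obtain ⟨γ, rfl⟩ := exists_loopClass_eq g
    obtain ⟨τ, hτ⟩ := exists_homotopic_map_topIncl hm hp γ
    exact ⟨loopClass τ, by rw [map_loopClass, loopClass_eq_loopClass_iff]; exact hτ.symm⟩
  refine ⟨MulEquiv.ofBijective _ ⟨hinj, hsurj⟩, fun γ γ' hγ => ?_⟩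
  exact (map_loopClass (topIncl hm) γ).trans
    (congrArg loopClass (Path.ext (funext fun t => Subtype.ext (hγ t))))

end
end

section
/- Let (X,d) be a metric space, x₀ ∈ X, and (Xᵢ)_{i∈ℕ} a family of closed subsets with ⋃ᵢ Xᵢ = X, with Xᵢ ∩ Xⱼ = {x₀} for all i ≠ j, and with d(x,y) = d(x,x₀) + d(x₀,y) whenever x ∈ Xᵢ and y ∈ Xⱼ with i ≠ j. Suppose for each i that Hᵢ : Xᵢ × [0,1] → Xᵢ is a strong deformation contraction of (Xᵢ, x₀). Then the map H : X × [0,1] → X defined by H(x,t) = Hᵢ(x,t) for x ∈ Xᵢ is well-defined, continuous, and a strong deformation contraction of (X, x₀). -/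
open unitInterval

/-- `H` is a strong deformation contraction of the subset `S` of the metric space `A`
to the point `a₀ ∈ S`: it is continuous on `S × [0,1]`, maps `S × [0,1]` into `S`,
starts at the identity, ends at the constant map `a₀`, fixes `a₀` throughout, and does
not increase distances at any time. -/
def IsStrongDefContractionOn {A : Type*} [MetricSpace A] (S : Set A) (a₀ : A)
    (H : A × I → A) : Prop :=
  a₀ ∈ S ∧
  ContinuousOn H (S ×ˢ (Set.univ : Set I)) ∧
  (∀ x ∈ S, ∀ t : I, H (x, t) ∈ S) ∧
  (∀ x ∈ S, H (x, 0) = x) ∧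
  (∀ x ∈ S, H (x, 1) = a₀) ∧
  (∀ t : I, H (a₀, t) = a₀) ∧
  (∀ x ∈ S, ∀ y ∈ S, ∀ t : I, dist (H (x, t)) (H (y, t)) ≤ dist x y)

/-- if a metric space `X` is the metric wedge at `x₀` of closed subsets
`Xᵢ`, and each `Xᵢ` admits a strong deformation contraction `Hᵢ` to `x₀`, then the map
defined by `H(x,t) = Hᵢ(x,t)` for `x ∈ Xᵢ` is well defined (the `Hᵢ` agree on overlaps),
and any such `H` is a (continuous) strong deformation contraction of `X` to `x₀`. -/
theorem metricWedge_strongDefContraction {X : Type*} [MetricSpace X] (x₀ : X)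
    (Xs : ℕ → Set X) (hclosed : ∀ i, IsClosed (Xs i)) (hunion : ⋃ i, Xs i = Set.univ)
    (hinter : ∀ i j, i ≠ j → Xs i ∩ Xs j = {x₀})
    (hdist : ∀ i j, i ≠ j → ∀ x ∈ Xs i, ∀ y ∈ Xs j, dist x y = dist x x₀ + dist x₀ y)
    (Hfam : ℕ → X × I → X)
    (hH : ∀ i, IsStrongDefContractionOn (Xs i) x₀ (Hfam i)) :
    (∀ i j, ∀ x, x ∈ Xs i → x ∈ Xs j → ∀ t : I, Hfam i (x, t) = Hfam j (x, t)) ∧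
    ∀ H : X × I → X, (∀ i, ∀ x ∈ Xs i, ∀ t : I, H (x, t) = Hfam i (x, t)) →
      Continuous H ∧ IsStrongDefContractionOn Set.univ x₀ H :=  by
  have hmem : ∀ x : X, ∃ i, x ∈ Xs i := by
    intro x
    have hx : x ∈ ⋃ i, Xs i := hunion ▸ Set.mem_univ x
    exact Set.mem_iUnion.mp hx
  have hfix : ∀ i (t : I), Hfam i (x₀, t) = x₀ := fun i t => (hH i).2.2.2.2.2.1 t
  have hx0mem : ∀ i, x₀ ∈ Xs i := fun i => (hH i).1
  have hwd : ∀ i j, ∀ x, x ∈ Xs i → x ∈ Xs j → ∀ t : I, Hfam i (x, t) = Hfam j (x, t) := by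
    intro i j x hxi hxj t
    by_cases hij : i = j
    · subst hij; rfl
    · have hx : x = x₀ := by
        have h := hinter i j hij
        have hx' : x ∈ ({x₀} : Set X) := h ▸ ⟨hxi, hxj⟩
        exact hx'
      subst hx
      rw [hfix i t, hfix j t]
  refine ⟨hwd, fun H hHe => ?_⟩
  have hlip : ∀ x y (t : I), dist (H (x, t)) (H (y, t)) ≤ dist x y := by
    intro x y t
    obtain ⟨i, hxi⟩ := hmem x
    obtain ⟨j, hyj⟩ := hmem y
    by_cases hij : i = j
    · subst hij
      rw [hHe i x hxi t, hHe i y hyj t]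
      exact (hH i).2.2.2.2.2.2 x hxi y hyj t
    · have h1 : dist (H (x, t)) x₀ ≤ dist x x₀ := by
        rw [hHe i x hxi t]
        calc dist (Hfam i (x, t)) x₀ = dist (Hfam i (x, t)) (Hfam i (x₀, t)) := by rw [hfix i t]
          _ ≤ dist x x₀ := (hH i).2.2.2.2.2.2 x hxi x₀ (hx0mem i) t
      have h2 : dist x₀ (H (y, t)) ≤ dist x₀ y := by
        rw [hHe j y hyj t, dist_comm, dist_comm x₀ y]
        calc dist (Hfam j (y, t)) x₀ = dist (Hfam j (y, t)) (Hfam j (x₀, t)) := by rw [hfix j t]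
          _ ≤ dist y x₀ := (hH j).2.2.2.2.2.2 y hyj x₀ (hx0mem j) t
      calc dist (H (x, t)) (H (y, t)) ≤ dist (H (x, t)) x₀ + dist x₀ (H (y, t)) :=
            dist_triangle _ _ _
        _ ≤ dist x x₀ + dist x₀ y := add_le_add h1 h2
        _ = dist x y := (hdist i j hij x hxi y hyj).symm
  have hcont : Continuous H := by
    rw [Metric.continuous_iff]
    rintro ⟨x, t⟩ ε hε
    obtain ⟨i, hxi⟩ := hmem x
    have hg : Continuous (fun s : I => Hfam i (x, s)) :=
      (hH i).2.1.comp_continuous (continuous_const.prodMk continuous_id)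
        (fun s => ⟨hxi, trivial⟩)
    obtain ⟨δ₁, hδ₁, hδ₁'⟩ := Metric.continuous_iff.mp hg t (ε / 2) (by linarith)
    refine ⟨min δ₁ (ε / 2), by positivity, ?_⟩
    rintro ⟨y, s⟩ hd
    rw [Prod.dist_eq] at hd
    have hdy : dist y x < ε / 2 :=
      lt_of_le_of_lt (le_max_left _ _) (lt_of_lt_of_le hd (min_le_right _ _))
    have hds : dist s t < δ₁ :=
      lt_of_le_of_lt (le_max_right _ _) (lt_of_lt_of_le hd (min_le_left _ _))
    have hgt := hδ₁' s hds
    calc dist (H (y, s)) (H (x, t))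
        ≤ dist (H (y, s)) (H (x, s)) + dist (H (x, s)) (H (x, t)) := dist_triangle _ _ _
      _ = dist (H (y, s)) (H (x, s)) + dist (Hfam i (x, s)) (Hfam i (x, t)) := by
          rw [hHe i x hxi s, hHe i x hxi t]
      _ ≤ dist y x + dist (Hfam i (x, s)) (Hfam i (x, t)) :=
          add_le_add (hlip y x s) le_rfl
      _ < ε / 2 + ε / 2 := add_lt_add hdy hgt
      _ = ε := by ring
  refine ⟨hcont, ⟨Set.mem_univ _, hcont.continuousOn, fun x _ t => Set.mem_univ _,
    ?_, ?_, ?_, fun x _ y _ t => hlip x y t⟩⟩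
  · intro x _
    obtain ⟨i, hxi⟩ := hmem x
    rw [hHe i x hxi 0]
    exact (hH i).2.2.2.1 x hxi
  · intro x _
    obtain ⟨i, hxi⟩ := hmem x
    rw [hHe i x hxi 1]
    exact (hH i).2.2.2.2.1 x hxi
  · intro t
    rw [hHe 0 x₀ (hx0mem 0) t]
    exact hfix 0 t
end

section
/- Let (X,d) be a metric space, x₀ ∈ X, and (Xᵢ)_{i∈ℕ} a family of closed subsets with ⋃ᵢ Xᵢ = X, with Xᵢ ∩ Xⱼ = {x₀} for all i ≠ j, and with d(x,y) = d(x,x₀) + d(x₀,y) whenever x ∈ Xᵢ and y ∈ Xⱼ with i ≠ j. Let r > 0 and suppose that for each i the open r-ball Uᵢ = {x ∈ Xᵢ : d(x,x₀) < r} admits a strong deformation contraction of (Uᵢ, x₀). Then for every compact topological space K with basepoint k₀ and every continuous map f : K → X with f(k₀) = x₀, there exist a finite set S ⊆ ℕ and a continuous map g : K → X with g(K) ⊆ ⋃_{i∈S} Xᵢ such that f and g are homotopic relative to {k₀}. -/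
/-!
Let `C` be the compact image of `f`. Points of `C` at distance `≥ r` from `x₀` lying in
different pieces are `2r` apart, so a finite cover of `C` by `r`-balls shows that only finitely
many pieces `Xᵢ` reach out of the `r`-ball inside `C`. On every other piece, `C` stays inside
`Uᵢ`, and we run the given contraction of `Uᵢ` there while keeping the finitely many remaining
pieces fixed. Near a point other than `x₀` this is a single contraction, since the wedge metric
keeps the other pieces far away; at `x₀` it is continuous because the contractions do not
increase the distance to `x₀`. At time `1` every point of `C` lies in `x₀` or in one of the
finitely many remaining pieces.
-/

open unitInterval

open Set Topology

namespace IsStrongDefContractionOn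

variable {A : Type*} [MetricSpace A] {S : Set A} {a₀ : A} {H : A × I → A}

theorem continuousOn (hH : IsStrongDefContractionOn S a₀ H) :
    ContinuousOn H (S ×ˢ (univ : Set I)) :=
  hH.2.1

theorem apply_zero (hH : IsStrongDefContractionOn S a₀ H) {x : A} (hx : x ∈ S) :
    H (x, 0) = x :=
  hH.2.2.2.1 x hx

theorem apply_one (hH : IsStrongDefContractionOn S a₀ H) {x : A} (hx : x ∈ S) :
    H (x, 1) = a₀ :=
  hH.2.2.2.2.1 x hx

theorem apply_base (hH : IsStrongDefContractionOn S a₀ H) (t : I) : H (a₀, t) = a₀ :=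
  hH.2.2.2.2.2.1 t

theorem dist_apply_le (hH : IsStrongDefContractionOn S a₀ H) {x : A} (hx : x ∈ S) (t : I) :
    dist (H (x, t)) a₀ ≤ dist x a₀ := by
  obtain ⟨ha₀, -, -, -, -, hfix, hlip⟩ := hH
  simpa only [hfix t] using hlip x hx a₀ ha₀ t

end IsStrongDefContractionOn

def IsMetricWedge {ι X : Type*} [MetricSpace X] (x₀ : X) (Xs : ι → Set X) : Prop :=
  ∀ i j, i ≠ j → ∀ x ∈ Xs i, ∀ y ∈ Xs j, dist x y = dist x x₀ + dist x₀ y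

namespace IsMetricWedge

variable {ι X : Type*} [MetricSpace X] {x₀ : X} {Xs : ι → Set X}

theorem eq_of_dist_lt (hW : IsMetricWedge x₀ Xs) {i j : ι} {x y : X} (hx : x ∈ Xs i)
    (hy : y ∈ Xs j) (hxy : dist y x < dist x x₀) : j = i := by
  by_contra hji
  have h := hW j i hji y hy x hx
  rw [dist_comm x₀ x] at h
  linarith [dist_nonneg (x := y) (y := x₀)]

theorem two_mul_le_dist (hW : IsMetricWedge x₀ Xs) {i j : ι} (hij : i ≠ j) {x y : X}
    (hx : x ∈ Xs i) (hy : y ∈ Xs j) {r : ℝ} (hxr : r ≤ dist x x₀) (hyr : r ≤ dist y x₀) :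
    2 * r ≤ dist x y := by
  rw [hW i j hij x hx y hy, dist_comm x₀ y]
  linarith

theorem finite_setOf_exists_le_dist (hW : IsMetricWedge x₀ Xs) {C : Set X} (hC : IsCompact C)
    {r : ℝ} (hr : 0 < r) : {i | ∃ x ∈ C ∩ Xs i, r ≤ dist x x₀}.Finite := by
  set S := {i | ∃ x ∈ C ∩ Xs i, r ≤ dist x x₀}
  obtain ⟨t, ht, hCt⟩ := Metric.totallyBounded_iff.1 hC.totallyBounded r hr
  choose w hw hwr using fun i : S => i.2
  have hcover : ∀ i : S, ∃ y ∈ t, w i ∈ Metric.ball y r := fun i => by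
    simpa only [mem_iUnion, exists_prop] using hCt (hw i).1
  choose c hct hc using hcover
  -- Each `r`-ball of the cover meets the far part of at most one piece.
  have hinj : Function.Injective fun i : S => (⟨c i, hct i⟩ : t) := by
    intro i j hij
    by_contra hne
    have hsep := hW.two_mul_le_dist (Subtype.coe_ne_coe.2 hne) (hw i).2 (hw j).2 (hwr i) (hwr j)
    have hi := Metric.mem_ball.1 (hc i)
    have hj := Metric.mem_ball.1 (hc j)
    rw [← show c i = c j from congrArg Subtype.val hij] at hj
    linarith [dist_triangle_right (w i) (w j) (c i)]
  have := ht.to_subtype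
  exact finite_coe_iff.1 (Finite.of_injective _ hinj)

end IsMetricWedge

section ContractPieces

variable {ι X : Type*} [MetricSpace X] {x₀ : X} {Xs : ι → Set X}

open Classical in
/-- Here `piece x` is meant to be a chosen piece containing `x`. -/
noncomputable def contractPieces (piece : X → ι) (T : Set ι) (H : ι → X × I → X)
    (p : X × I) : X :=
  if piece p.1 ∈ T then H (piece p.1) p else p.1

variable {piece : X → ι} {T : Set ι} {H : ι → X × I → X} {r : ℝ} {C : Set X}

theorem contractPieces_base
    (hH : ∀ i, IsStrongDefContractionOn {x ∈ Xs i | dist x x₀ < r} x₀ (H i)) (t : I) :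
    contractPieces piece T H (x₀, t) = x₀ := by
  unfold contractPieces
  split_ifs
  exacts [(hH _).apply_base t, rfl]

theorem contractPieces_zero (hpiece : ∀ x, x ∈ Xs (piece x))
    (hH : ∀ i, IsStrongDefContractionOn {x ∈ Xs i | dist x x₀ < r} x₀ (H i)) {x : X}
    (hx : piece x ∈ T → dist x x₀ < r) : contractPieces piece T H (x, 0) = x := by
  unfold contractPieces
  split_ifs with h
  exacts [(hH _).apply_zero ⟨hpiece x, hx h⟩, rfl]

theorem contractPieces_one_mem (hpiece : ∀ x, x ∈ Xs (piece x))
    (hH : ∀ i, IsStrongDefContractionOn {x ∈ Xs i | dist x x₀ < r} x₀ (H i)) {S : Set ι}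
    (hS₀ : piece x₀ ∈ S) (hTS : Tᶜ ⊆ S) {x : X} (hx : piece x ∈ T → dist x x₀ < r) :
    contractPieces piece T H (x, 1) ∈ ⋃ i ∈ S, Xs i := by
  unfold contractPieces
  split_ifs with h
  · rw [(hH _).apply_one ⟨hpiece x, hx h⟩]
    exact mem_biUnion hS₀ (hpiece x₀)
  · exact mem_biUnion (hTS h) (hpiece x)

theorem dist_contractPieces_le (hpiece : ∀ x, x ∈ Xs (piece x))
    (hH : ∀ i, IsStrongDefContractionOn {x ∈ Xs i | dist x x₀ < r} x₀ (H i)) {x : X}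
    (hx : piece x ∈ T → dist x x₀ < r) (t : I) :
    dist (contractPieces piece T H (x, t)) x₀ ≤ dist x x₀ := by
  unfold contractPieces
  split_ifs with h
  exacts [(hH _).dist_apply_le ⟨hpiece x, hx h⟩ t, le_rfl]

theorem continuousWithinAt_contractPieces_base (hpiece : ∀ x, x ∈ Xs (piece x))
    (hH : ∀ i, IsStrongDefContractionOn {x ∈ Xs i | dist x x₀ < r} x₀ (H i))
    (hC : ∀ x ∈ C, piece x ∈ T → dist x x₀ < r) (t : I) :
    ContinuousWithinAt (contractPieces piece T H) (C ×ˢ univ) (x₀, t) := by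
  refine Metric.continuousWithinAt_iff.2 fun ε hε => ⟨ε, hε, fun {p} hp hpε => ?_⟩
  rw [contractPieces_base hH]
  calc dist (contractPieces piece T H p) x₀ ≤ dist p.1 x₀ :=
        dist_contractPieces_le hpiece hH (hC p.1 hp.1) p.2
    _ ≤ dist p (x₀, t) := le_max_left _ _
    _ < ε := hpε

theorem continuousWithinAt_contractPieces_of_ne (hW : IsMetricWedge x₀ Xs)
    (hpiece : ∀ x, x ∈ Xs (piece x))
    (hH : ∀ i, IsStrongDefContractionOn {x ∈ Xs i | dist x x₀ < r} x₀ (H i))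
    (hC : ∀ x ∈ C, piece x ∈ T → dist x x₀ < r) {x : X} (hxC : x ∈ C) (hx : x ≠ x₀) (t : I) :
    ContinuousWithinAt (contractPieces piece T H) (C ×ˢ univ) (x, t) := by
  -- Near `x`, the wedge metric leaves only the piece of `x`.
  have hnear : ∀ᶠ p in 𝓝[C ×ˢ univ] (x, t), p.1 ∈ C ∧ piece p.1 = piece x := by
    filter_upwards [continuous_fst.continuousWithinAt.eventually
      (Metric.ball_mem_nhds x (dist_pos.2 hx)), self_mem_nhdsWithin] with p hpx hpC
    exact ⟨hpC.1, hW.eq_of_dist_lt (hpiece x) (hpiece p.1) hpx⟩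
  by_cases hT : piece x ∈ T
  · have hU : ∀ᶠ p in 𝓝[C ×ˢ univ] (x, t),
        p ∈ {y ∈ Xs (piece x) | dist y x₀ < r} ×ˢ (univ : Set I) := by
      filter_upwards [hnear] with p hp
      exact ⟨⟨hp.2 ▸ hpiece p.1, hC p.1 hp.1 (hp.2 ▸ hT)⟩, trivial⟩
    have hHx : ContinuousWithinAt (H (piece x)) (C ×ˢ univ) (x, t) :=
      ((hH _).continuousOn (x, t) ⟨⟨hpiece x, hC x hxC hT⟩, trivial⟩).mono_of_mem_nhdsWithin hU
    refine hHx.congr_of_eventuallyEq ?_ (if_pos hT)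
    filter_upwards [hnear] with p hp
    exact (if_pos (hp.2 ▸ hT)).trans (congrArg (H · p) hp.2)
  · refine continuous_fst.continuousWithinAt.congr_of_eventuallyEq ?_ (if_neg hT)
    filter_upwards [hnear] with p hp
    exact if_neg (hp.2 ▸ hT)

theorem continuousOn_contractPieces (hW : IsMetricWedge x₀ Xs) (hpiece : ∀ x, x ∈ Xs (piece x))
    (hH : ∀ i, IsStrongDefContractionOn {x ∈ Xs i | dist x x₀ < r} x₀ (H i))
    (hC : ∀ x ∈ C, piece x ∈ T → dist x x₀ < r) :
    ContinuousOn (contractPieces piece T H) (C ×ˢ univ) := by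
  rintro ⟨x, t⟩ ⟨hxC, -⟩
  obtain rfl | hx := eq_or_ne x x₀
  · exact continuousWithinAt_contractPieces_base hpiece hH hC t
  · exact continuousWithinAt_contractPieces_of_ne hW hpiece hH hC hxC hx t

end ContractPieces

theorem ContinuousOn.exists_homotopicRel {K X : Type*} [TopologicalSpace K]
    [TopologicalSpace X] {C : Set X} {Φ : X × I → X} (hΦ : ContinuousOn Φ (C ×ˢ univ))
    (hΦ₀ : ∀ x ∈ C, Φ (x, 0) = x) (f : C(K, X)) (hfC : ∀ k, f k ∈ C) {S : Set K}
    (hS : ∀ k ∈ S, ∀ t, Φ (f k, t) = f k) :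
    ∃ g : C(K, X), (∀ k, g k = Φ (f k, 1)) ∧ f.HomotopicRel g S := by
  have hF : Continuous fun p : I × K => Φ (f p.2, p.1) :=
    hΦ.comp_continuous ((f.continuous.comp continuous_snd).prodMk continuous_fst)
      fun p => ⟨hfC p.2, trivial⟩
  let F : C(I × K, X) := ⟨_, hF⟩
  refine ⟨⟨fun k => F (1, k), by fun_prop⟩, fun k => rfl,
    ⟨⟨⟨F, fun k => hΦ₀ _ (hfC k), fun k => rfl⟩, fun t k hk => hS k hk t⟩⟩⟩

theorem metricWedge_compact_maps_into_finite_subwedge_general {X : Type*} [MetricSpace X] (x₀ : X)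
    (Xs : ℕ → Set X) (hunion : ⋃ i, Xs i = Set.univ)
    (hdist : ∀ i j, i ≠ j → ∀ x ∈ Xs i, ∀ y ∈ Xs j, dist x y = dist x x₀ + dist x₀ y)
    (r : ℝ) (hr : 0 < r)
    (hU : ∀ i, ∃ H : X × I → X,
      IsStrongDefContractionOn {x ∈ Xs i | dist x x₀ < r} x₀ H)
    (K : Type*) [TopologicalSpace K] [CompactSpace K] (k₀ : K)
    (f : C(K, X)) (hf : f k₀ = x₀) :
    ∃ (S : Finset ℕ) (g : C(K, X)),
      Set.range g ⊆ ⋃ i ∈ S, Xs i ∧ ContinuousMap.HomotopicRel f g {k₀} := by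
  choose H hH using hU
  choose piece hpiece using fun x => mem_iUnion.1 (hunion.symm ▸ mem_univ x : x ∈ ⋃ i, Xs i)
  have hW : IsMetricWedge x₀ Xs := hdist
  set far := {i | ∃ x ∈ range f ∩ Xs i, r ≤ dist x x₀}
  have hfar : far.Finite := hW.finite_setOf_exists_le_dist (isCompact_range f.continuous) hr
  have hC : ∀ x ∈ range f, piece x ∈ farᶜ → dist x x₀ < r :=
    fun x hx hx' => not_le.1 fun h => hx' ⟨x, ⟨hx, hpiece x⟩, h⟩
  obtain ⟨g, hg, hfg⟩ := (continuousOn_contractPieces hW hpiece hH hC).exists_homotopicRel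
    (fun x hx => contractPieces_zero hpiece hH (hC x hx)) f mem_range_self (S := {k₀})
    (by rintro k rfl t; rw [hf]; exact contractPieces_base hH t)
  refine ⟨insert (piece x₀) hfar.toFinset, g, ?_, hfg⟩
  rintro _ ⟨k, rfl⟩
  rw [hg]
  exact contractPieces_one_mem hpiece hH (by simp)
    (fun _ hi => Finset.mem_insert_of_mem (hfar.mem_toFinset.2 (not_not.1 hi)))
    (hC _ (mem_range_self k))

/-- if a metric space `X` is the metric wedge at `x₀` of closed subsets
`Xᵢ` and for some `r > 0` each open ball `Uᵢ = {x ∈ Xᵢ : d(x,x₀) < r}` admits a strong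
deformation contraction to `x₀`, then every pointed map from a compact space `K` into
`X` is homotopic rel the basepoint to a map whose image lies in finitely many `Xᵢ`. -/
theorem metricWedge_compact_maps_into_finite_subwedge {X : Type*} [MetricSpace X] (x₀ : X)
    (Xs : ℕ → Set X) (hclosed : ∀ i, IsClosed (Xs i)) (hunion : ⋃ i, Xs i = Set.univ)
    (hinter : ∀ i j, i ≠ j → Xs i ∩ Xs j = {x₀})
    (hdist : ∀ i j, i ≠ j → ∀ x ∈ Xs i, ∀ y ∈ Xs j, dist x y = dist x x₀ + dist x₀ y)
    (r : ℝ) (hr : 0 < r)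
    (hU : ∀ i, ∃ H : X × I → X,
      IsStrongDefContractionOn {x ∈ Xs i | dist x x₀ < r} x₀ H)
    (K : Type*) [TopologicalSpace K] [CompactSpace K] (k₀ : K)
    (f : C(K, X)) (hf : f k₀ = x₀) :
    ∃ (S : Finset ℕ) (g : C(K, X)),
      Set.range g ⊆ ⋃ i ∈ S, Xs i ∧ ContinuousMap.HomotopicRel f g {k₀} :=
  metricWedge_compact_maps_into_finite_subwedge_general x₀ Xs hunion hdist r hr hU K k₀ f hf
end

section
/- For all m, p > 0, the wall W(m,p) = {(r·cos φ, r·sin φ, z) : z ∈ (0,m], φ ∈ [−π,π], r = (|φ|/π)·sin(πp/z) + 2}, with the subspace topology of ℝ³, is homeomorphic to S¹ × (0,1]. -/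
open Real Set

noncomputable section

/-- The unit circle in `ℝ²`. -/
def circleSet : Set (ℝ × ℝ) := {q | q.1 ^ 2 + q.2 ^ 2 = 1}


lemma HVaux_one_le {a s : ℝ} (ha0 : 0 ≤ a) (ha1 : a ≤ 1) (hs : |s| ≤ 1) :
    1 ≤ a * s + 2 := by
  have h := abs_le.mp hs
  nlinarith

lemma HVaux_arccos_cos_abs {φ : ℝ} (h : φ ∈ Set.Icc (-π) π) :
    Real.arccos (Real.cos φ) = |φ| := by
  rcases le_total 0 φ with h0 | h0
  · rw [abs_of_nonneg h0, Real.arccos_cos h0 h.2]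
  · rw [abs_of_nonpos h0, ← Real.cos_neg,
      Real.arccos_cos (neg_nonneg.mpr h0) (by linarith [h.1])]

lemma HVaux_sum_sq (R c s : ℝ) (hcs : c ^ 2 + s ^ 2 = 1) (hR : 0 ≤ R) :
    Real.sqrt ((R * c) ^ 2 + (R * s) ^ 2) = R := by
  have h : (R * c) ^ 2 + (R * s) ^ 2 = R ^ 2 := by nlinarith
  rw [h, Real.sqrt_sq hR]

/-- For a point on the wall, the facts we need. -/
lemma HVaux_wall_facts {m p : ℝ} {q : ℝ × ℝ × ℝ} (hq : q ∈ HVwall m p) :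
    q.2.2 ∈ Set.Ioc (0 : ℝ) m ∧ 1 ≤ Real.sqrt (q.1 ^ 2 + q.2.1 ^ 2) := by
  obtain ⟨z, hz, φ, hφ, rfl⟩ := hq
  refine ⟨hz, ?_⟩
  have hφle : |φ| ≤ π := abs_le.mpr ⟨hφ.1, hφ.2⟩
  have hR : 1 ≤ |φ| / π * Real.sin (π * p / z) + 2 :=
    HVaux_one_le (div_nonneg (abs_nonneg φ) Real.pi_pos.le)
      ((div_le_one Real.pi_pos).mpr hφle) (Real.abs_sin_le_one _)
  rw [HVaux_sum_sq _ _ _ (by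
    have := Real.sin_sq_add_cos_sq φ; linarith) (by linarith)]
  exact hR

/-- the wall `W(m,p)` of the harmonic vase is homeomorphic to
`S¹ × (0,1]`. -/
theorem HVwall_homeomorph_circle_prod_Ioc (m p : ℝ) (hm : 0 < m) (hp : 0 < p) :
    Nonempty (HVwall m p ≃ₜ circleSet × Set.Ioc (0 : ℝ) 1) := by
  classical
  set n : ℝ × ℝ × ℝ → ℝ := fun q => Real.sqrt (q.1 ^ 2 + q.2.1 ^ 2) with hn
  have hn1 : ∀ q : HVwall m p, 1 ≤ n q.1 := fun q => (HVaux_wall_facts q.2).2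
  have hnne : ∀ q : HVwall m p, n q.1 ≠ 0 := fun q => by
    have := hn1 q; positivity
  set R : (ℝ × ℝ) × ℝ → ℝ :=
    fun c => Real.arccos c.1.1 / π * Real.sin (π * p / (m * c.2)) + 2 with hRdef
  have hR1 : ∀ c, 1 ≤ R c := fun c =>
    HVaux_one_le (div_nonneg (Real.arccos_nonneg _) Real.pi_pos.le)
      ((div_le_one Real.pi_pos).mpr (Real.arccos_le_pi _)) (Real.abs_sin_le_one _)
  have hcirc : ∀ q : HVwall m p,
      (q.1.1 / n q.1, q.1.2.1 / n q.1) ∈ circleSet := by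
    intro q
    have h1 := hnne q
    have h2 : n q.1 ^ 2 = q.1.1 ^ 2 + q.1.2.1 ^ 2 :=
      Real.sq_sqrt (by positivity)
    simp only [circleSet, Set.mem_setOf_eq]
    field_simp
    linarith
  have hIoc : ∀ q : HVwall m p, q.1.2.2 / m ∈ Set.Ioc (0 : ℝ) 1 := by
    intro q
    have h := (HVaux_wall_facts q.2).1
    exact ⟨div_pos h.1 hm, (div_le_one hm).mpr h.2⟩
  have hbwd : ∀ c : circleSet × Set.Ioc (0 : ℝ) 1,
      (R ((c.1 : ℝ × ℝ), (c.2 : ℝ)) * (c.1 : ℝ × ℝ).1,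
       R ((c.1 : ℝ × ℝ), (c.2 : ℝ)) * (c.1 : ℝ × ℝ).2, m * (c.2 : ℝ))
        ∈ HVwall m p := by
    rintro ⟨⟨⟨x, y⟩, hc⟩, ⟨t, ht⟩⟩
    have hc' : x ^ 2 + y ^ 2 = 1 := hc
    have hx1 : -1 ≤ x := by nlinarith
    have hx2 : x ≤ 1 := by nlinarith
    refine ⟨m * t, ⟨mul_pos hm ht.1, by nlinarith [ht.1, ht.2]⟩,
      if 0 ≤ y then Real.arccos x else -Real.arccos x, ?_, ?_⟩
    · rcases le_or_gt 0 y with h | h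
      · rw [if_pos h]
        exact ⟨by linarith [Real.arccos_nonneg x, Real.pi_pos],
               Real.arccos_le_pi x⟩
      · rw [if_neg (not_le.mpr h)]
        exact ⟨by linarith [Real.arccos_le_pi x],
               by linarith [Real.arccos_nonneg x, Real.pi_pos]⟩
    · have habs : |if 0 ≤ y then Real.arccos x else -Real.arccos x|
          = Real.arccos x := by
        rcases le_or_gt 0 y with h | h
        · rw [if_pos h, abs_of_nonneg (Real.arccos_nonneg x)]
        · rw [if_neg (not_le.mpr h), abs_neg, abs_of_nonneg (Real.arccos_nonneg x)]
      have hcos : Real.cos (if 0 ≤ y then Real.arccos x else -Real.arccos x)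
          = x := by
        rcases le_or_gt 0 y with h | h
        · rw [if_pos h, Real.cos_arccos hx1 hx2]
        · rw [if_neg (not_le.mpr h), Real.cos_neg, Real.cos_arccos hx1 hx2]
      have hsin : Real.sin (if 0 ≤ y then Real.arccos x else -Real.arccos x)
          = y := by
        have h12 : Real.sin (Real.arccos x) = |y| := by
          rw [Real.sin_arccos]
          have h13 : 1 - x ^ 2 = y ^ 2 := by linarith
          rw [h13, Real.sqrt_sq_eq_abs]
        rcases le_or_gt 0 y with h | h
        · rw [if_pos h, h12, abs_of_nonneg h]
        · rw [if_neg (not_le.mpr h), Real.sin_neg, h12, abs_of_neg h, neg_neg]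
      rw [habs, hcos, hsin]
  refine ⟨{ toFun := fun q => (⟨_, hcirc q⟩, ⟨_, hIoc q⟩),
            invFun := fun c => ⟨_, hbwd c⟩,
            left_inv := ?_,
            right_inv := ?_,
            continuous_toFun := ?_,
            continuous_invFun := ?_ }⟩
  · rintro ⟨q, hq⟩
    obtain ⟨z, hz, φ, hφ, rfl⟩ := hq
    have hφle : |φ| ≤ π := abs_le.mpr ⟨hφ.1, hφ.2⟩
    set Rq := |φ| / π * Real.sin (π * p / z) + 2 with hRq
    have hRq1 : 1 ≤ Rq :=
      HVaux_one_le (div_nonneg (abs_nonneg φ) Real.pi_pos.le)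
        ((div_le_one Real.pi_pos).mpr hφle) (Real.abs_sin_le_one _)
    have hRqne : Rq ≠ 0 := by linarith
    have hnval : n (Rq * Real.cos φ, Rq * Real.sin φ, z) = Rq := by
      simp only [hn]
      exact HVaux_sum_sq _ _ _ (by
        have := Real.sin_sq_add_cos_sq φ; linarith) (by linarith)
    apply Subtype.ext
    dsimp only
    rw [hnval, mul_div_cancel_left₀ _ hRqne, mul_div_cancel_left₀ _ hRqne]
    simp only [hRdef]
    rw [mul_div_cancel₀ _ hm.ne', HVaux_arccos_cos_abs hφ]
  · rintro ⟨⟨⟨x, y⟩, hc⟩, ⟨t, ht⟩⟩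
    have hc' : x ^ 2 + y ^ 2 = 1 := hc
    set Rc := R ((x, y), t) with hRc
    have hRc1 : 1 ≤ Rc := hR1 _
    have hRcne : Rc ≠ 0 := by linarith
    have hnval : n (Rc * x, Rc * y, m * t) = Rc := by
      simp only [hn]
      exact HVaux_sum_sq _ _ _ hc' (by linarith)
    refine Prod.ext (Subtype.ext ?_) (Subtype.ext ?_)
    · dsimp only
      rw [hnval, mul_div_cancel_left₀ _ hRcne, mul_div_cancel_left₀ _ hRcne]
    · dsimp only
      rw [mul_div_cancel_left₀ _ hm.ne']
  · have hncont : Continuous fun q : HVwall m p => n q.1 := by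
      simp only [hn]
      fun_prop
    apply Continuous.prodMk
    · apply Continuous.subtype_mk
      apply Continuous.prodMk
      · exact (continuous_fst.comp continuous_subtype_val).div hncont hnne
      · exact ((continuous_fst.comp continuous_snd).comp continuous_subtype_val).div
          hncont hnne
    · apply Continuous.subtype_mk
      exact ((continuous_snd.comp continuous_snd).comp continuous_subtype_val).div_const m
  · apply Continuous.subtype_mk
    have htne : ∀ c : circleSet × Set.Ioc (0 : ℝ) 1, m * (c.2 : ℝ) ≠ 0 :=
      fun c => by have := c.2.2.1; positivity
    have hRcont : Continuous fun c : circleSet × Set.Ioc (0 : ℝ) 1 =>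
        R ((c.1 : ℝ × ℝ), (c.2 : ℝ)) := by
      simp only [hRdef]
      apply Continuous.add
      · apply Continuous.mul
        · exact (Real.continuous_arccos.comp
            (continuous_fst.comp (continuous_subtype_val.comp continuous_fst))).div_const π
        · exact Real.continuous_sin.comp
            (continuous_const.div
              (continuous_const.mul (continuous_subtype_val.comp continuous_snd)) htne)
      · exact continuous_const
    refine Continuous.prodMk ?_ (Continuous.prodMk ?_ ?_)
    · exact hRcont.mul (continuous_fst.comp (continuous_subtype_val.comp continuous_fst))
    · exact hRcont.mul (continuous_snd.comp (continuous_subtype_val.comp continuous_fst))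
    · exact continuous_const.mul (continuous_subtype_val.comp continuous_snd)


end
end
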